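/- Let d, n, K ∈ ℕ with d, n, K ≥ 1, let β ∈ (0,1] and p ∈ [1,∞). There exist a Lebesgue-measurable set Ω ⊆ [0,1] with Lebesgue measure at most 2^{−Kβp} and a feedforward network f : ℝ → ℝ of depth 2K and width 4n with ReLU activation such that for every q ∈ {0, 1, …, n−1} and every x ∈ [2q, 2q+1] with x − 2q ∉ Ω, f(x) = 3^{1−q}·φ_K(x − 2q) + 9/2 − (1/2)·3^{2−q}. -/

import Mathlib

open Finset Real Set MeasureTheory

noncomputable section

/-- Matrix–vector product with explicit inner dimension `m`. -/
def mulVecN (W : ℕ → ℕ → ℝ) (m : ℕ) (v : ℕ → ℝ) : ℕ → ℝ :=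
  fun i => ∑ j ∈ Finset.range m, W i j * v j

/-- Matrix–matrix product with explicit inner dimension `m`. -/
def matMulN (A : ℕ → ℕ → ℝ) (m : ℕ) (B : ℕ → ℕ → ℝ) : ℕ → ℕ → ℝ :=
  fun i j => ∑ t ∈ Finset.range m, A i t * B t j

/-- The ReLU activation. -/
def reluF : ℝ → ℝ := fun x => max x 0

/-- The floor activation. -/
def floorF : ℝ → ℝ := fun x => (⌊x⌋ : ℝ)

/-- Hidden layers of a feedforward network acting on vectors:
`ffLayers dims Wt b act l x` is the output of the `l`-th hidden layer. -/
def ffLayers (dims : ℕ → ℕ) (Wt : ℕ → ℕ → ℕ → ℝ) (b : ℕ → ℕ → ℝ)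
    (act : ℕ → ℕ → ℝ → ℝ) : ℕ → (ℕ → ℝ) → ℕ → ℝ
  | 0, x => x
  | l + 1, x => fun i =>
      act (l + 1) i (mulVecN (Wt (l + 1)) (dims l) (ffLayers dims Wt b act l x) i + b (l + 1) i)

/-- `f` is a feedforward neural network function from `ℝ^k` to `ℝ^{k'}` of depth `L` and
width `W`, whose activation functions (which may vary between rows and layers) all belong
to `A`.  Vectors are represented as functions `ℕ → ℝ`; only the first `k` coordinates of the
input and the first `k'` coordinates of the output are relevant. -/
def IsFFNet (k k' L W : ℕ) (A : Set (ℝ → ℝ)) (f : (ℕ → ℝ) → ℕ → ℝ) : Prop :=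
  ∃ (dims : ℕ → ℕ) (Wt : ℕ → ℕ → ℕ → ℝ) (b : ℕ → ℕ → ℝ) (act : ℕ → ℕ → ℝ → ℝ),
    dims 0 = k ∧ dims L = k' ∧ (∀ l, 0 < l → l < L → dims l ≤ W) ∧
    (∀ l i, act l i ∈ A) ∧
    ∀ x, f x = mulVecN (Wt L) (dims (L - 1)) (ffLayers dims Wt b act (L - 1) x)

/-- Hidden layers of a feedforward block acting columnwise on matrices, with
column-dependent biases. -/
def ffBlockLayers (dims : ℕ → ℕ) (Wt : ℕ → ℕ → ℕ → ℝ) (B : ℕ → ℕ → ℕ → ℝ)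
    (act : ℕ → ℕ → ℝ → ℝ) : ℕ → (ℕ → ℕ → ℝ) → ℕ → ℕ → ℝ
  | 0, X => X
  | l + 1, X => fun i s =>
      act (l + 1) i
        (mulVecN (Wt (l + 1)) (dims l) (fun t => ffBlockLayers dims Wt B act l X t s) i
          + B (l + 1) i s)

/-- `F` is a feedforward block from `ℝ^{k×n}` to `ℝ^{k'×n}` of depth `L` and width `W`,
with activation functions in `A`; it acts on each column by the same affine maps, the bias
matrices may have distinct columns, and in each layer every row uses some activation from
`A` (possibly varying between rows and layers). -/
def IsFFBlock (k k' L W : ℕ) (A : Set (ℝ → ℝ)) (F : (ℕ → ℕ → ℝ) → ℕ → ℕ → ℝ) : Prop :=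
  ∃ (dims : ℕ → ℕ) (Wt : ℕ → ℕ → ℕ → ℝ) (B : ℕ → ℕ → ℕ → ℝ) (act : ℕ → ℕ → ℝ → ℝ),
    dims 0 = k ∧ dims L = k' ∧ (∀ l, 0 < l → l < L → dims l ≤ W) ∧
    (∀ l i, act l i ∈ A) ∧
    ∀ X i s,
      F X i s = mulVecN (Wt L) (dims (L - 1))
        (fun t => ffBlockLayers dims Wt B act (L - 1) X t s) i

/-- `F` is a single-head softmax self-attention layer on `m × n` matrices:
`F(X) = X + W_O W_V X σ_S[(W_K X)ᵀ (W_Q X)]`, where the softmax is applied columnwise. -/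
def IsSelfAttn (m n : ℕ) (F : (ℕ → ℕ → ℝ) → ℕ → ℕ → ℝ) : Prop :=
  ∃ (hs : ℕ) (WO WV WK WQ : ℕ → ℕ → ℝ),
    ∀ X i j,
      F X i j = X i j +
        matMulN (matMulN WO hs WV) m
          (matMulN X n (fun a b =>
            Real.exp (∑ u ∈ Finset.range hs, matMulN WK m X u a * matMulN WQ m X u b) /
              ∑ t ∈ Finset.range n,
                Real.exp (∑ u ∈ Finset.range hs, matMulN WK m X u t * matMulN WQ m X u b))) i j

/-- An affine map on matrices, acting columnwise: `A(Y) = W Y + b` with `W` a `k'×k`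
matrix and `b` a bias matrix. -/
def IsAffineM (k : ℕ) (A : (ℕ → ℕ → ℝ) → ℕ → ℕ → ℝ) : Prop :=
  ∃ (W : ℕ → ℕ → ℝ) (b : ℕ → ℕ → ℝ),
    ∀ Y i s, A Y i s = mulVecN W k (fun t => Y t s) i + b i s

/-- Embedding of a `d × n` real matrix into the `ℕ`-indexed representation. -/
def embedM {d n : ℕ} (X : Fin d → Fin n → ℝ) : ℕ → ℕ → ℝ :=
  fun i j => if h : i < d ∧ j < n then X ⟨i, h.1⟩ ⟨j, h.2⟩ else 0

/-- The Hölder class `H^β_Q([0,1]^{d×n}, ℝ^{d×n})`: every component of `f` is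
`(β,Q)`-Hölder on the unit cube w.r.t. the entrywise sup distance. -/
def HolderClassM (d n : ℕ) (β Q : ℝ)
    (f : (Fin d → Fin n → ℝ) → Fin d → Fin n → ℝ) : Prop :=
  ∀ X Y : Fin d → Fin n → ℝ,
    (∀ p q, X p q ∈ Set.Icc (0:ℝ) 1) → (∀ p q, Y p q ∈ Set.Icc (0:ℝ) 1) →
    ∀ r s, |f X r s - f Y r s| ≤ Q * dist X Y ^ β

/-- The `j`-th binary digit of `x` (terminating expansion for dyadic rationals). -/
def binDigit (x : ℝ) (j : ℕ) : ℤ :=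
  ⌊(2:ℝ) ^ j * x⌋ - 2 * ⌊(2:ℝ) ^ (j - 1) * x⌋

/-- The truncated inner function `φ_K(x) = Σ_{j=1}^K 2 a_j^x 3^{-1-D(j-1)}`. -/
def phiK (D K : ℕ) (x : ℝ) : ℝ :=
  ∑ j ∈ Finset.Icc 1 K, 2 * (binDigit x j : ℝ) * ((3:ℝ) ^ (1 + D * (j - 1)))⁻¹

/-- The inner function `φ(x) = Σ_{j=1}^∞ 2 a_j^x 3^{-1-D(j-1)}`. -/
def phiInf (D : ℕ) (x : ℝ) : ℝ :=
  ∑' j : ℕ, 2 * (binDigit x (j + 1) : ℝ) * ((3:ℝ) ^ (1 + D * j))⁻¹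

/-- The inner matrix `Z(X)`: `Z(X)_{rs}` is independent of `r` and equals
`3^{Kdn+1} Σ_{q=1}^n Σ_{p=1}^d 3^{-((p-1)n+q)} φ_K(X_{pq}) + 1 + (s-1) 3^{Kdn}`. -/
def innerZ (d n K : ℕ) (X : Fin d → Fin n → ℝ) (s : Fin n) : ℝ :=
  (3:ℝ) ^ (K * d * n + 1) *
      (∑ q : Fin n, ∑ p : Fin d,
        ((3:ℝ) ^ ((p : ℕ) * n + (q : ℕ) + 1))⁻¹ * phiK (d * n) K (X p q))
    + 1 + (s : ℕ) * (3:ℝ) ^ (K * d * n)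

/-- The Kolmogorov–Arnold inner sum `3 Σ_{q=1}^n Σ_{p=1}^d 3^{-((p-1)n+q)} φ(X_{pq})`. -/
def innerKA (d n : ℕ) (X : Fin d → Fin n → ℝ) : ℝ :=
  3 * ∑ q : Fin n, ∑ p : Fin d,
    ((3:ℝ) ^ ((p : ℕ) * n + (q : ℕ) + 1))⁻¹ * phiInf (d * n) (X p q)

/-- The unit cube `[0,1]^{d×n}`. -/
def unitBox (d n : ℕ) : Set (Fin d → Fin n → ℝ) :=
  {X | ∀ p q, X p q ∈ Set.Icc (0:ℝ) 1}

/-- `f` admits a Kolmogorov–Arnold representation with outer functions `g r s`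
(defined on the middle-thirds Cantor set), which are Hölder with exponent
`β log 2 / (dn log 3)` and constant `2^β Q`. -/
def HasKARep (d n : ℕ) (β Q : ℝ) (f : (Fin d → Fin n → ℝ) → Fin d → Fin n → ℝ)
    (g : Fin d → Fin n → ℝ → ℝ) : Prop :=
  (∀ r s, ∀ x ∈ cantorSet, ∀ y ∈ cantorSet,
      |g r s x - g r s y| ≤ (2:ℝ) ^ β * Q * |x - y| ^ (β * Real.log 2 / ((d * n : ℕ) * Real.log 3))) ∧
  (∀ X ∈ unitBox d n, ∀ r s, f X r s = g r s (innerKA d n X))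

/-! A block of four ReLU neurons per layer reads off the binary digits of its input `t`, one
digit per layer: `softBit δ` (a difference of two ReLUs) equals the indicator of `[1/2, ∞)` away
from an interval of length `δ`, so on `[0, 1)` the recursion `y ↦ 2y - softBit δ y` is the doubling
map `y ↦ frac (2y)`, and accumulating `c_j · softBit` gives `φ_K (t)` unless some `frac (2^i t)`,
`i < K`, falls into one of these intervals, which happens on a set of measure at most `Kδ`. For
`t ≤ 0` the block outputs `0`; for `t ≥ 2` all digits are `1` and the remainder stays `≥ 2`, so a
last layer adding `(1 - Σ c_j)` times a ReLU step of the remainder at `[1, 2]` makes the block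
output `1` there without changing it on `[0, 1)`. Placing `n` blocks side by side at the shifts `2q`
with output weights `3^(1-q)`, the point `x ∈ [2q, 2q+1]` sees `φ_K` in block `q`, `1` in the blocks
before it and `0` in those after it, and the geometric sum `Σ_{j<q} 3^(1-j) = 9/2 - 3^(2-q)/2`
gives the formula. Identity layers, harmless for ReLU on nonnegative values, pad the depth to `2K`.
-/

abbrev reluLayers (dims : ℕ → ℕ) (Wt : ℕ → ℕ → ℕ → ℝ) (b : ℕ → ℕ → ℝ) :
    ℕ → (ℕ → ℝ) → ℕ → ℝ :=
  ffLayers dims Wt b fun _ _ => reluF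

def IsReluNetFun (L W : ℕ) (g : ℝ → ℝ) : Prop :=
  ∃ F : (ℕ → ℝ) → ℕ → ℝ, IsFFNet 1 1 L W {reluF} F ∧ ∀ x, F (fun _ => x) 0 = g x

lemma reluF_nonneg (x : ℝ) : 0 ≤ reluF x := le_max_right x 0

lemma reluF_of_nonneg {x : ℝ} (h : 0 ≤ x) : reluF x = x := max_eq_left h

lemma reluF_of_nonpos {x : ℝ} (h : x ≤ 0) : reluF x = 0 := max_eq_right h

lemma reluF_reluF_sub {a : ℝ} (ha : 0 ≤ a) (x : ℝ) : reluF (reluF x - a) = reluF (x - a) := by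
  unfold reluF
  rcases le_total x 0 with hx | hx
  · rw [max_eq_right hx, max_eq_right (by linarith), max_eq_right (by linarith)]
  · rw [max_eq_left hx]


lemma mulVecN_congr (W : ℕ → ℕ → ℝ) {m : ℕ} {v v' : ℕ → ℝ} (h : ∀ j < m, v j = v' j)
    (i : ℕ) : mulVecN W m v i = mulVecN W m v' i :=
  Finset.sum_congr rfl fun j hj => by rw [h j (Finset.mem_range.1 hj)]

lemma reluLayers_zero (dims : ℕ → ℕ) (Wt : ℕ → ℕ → ℕ → ℝ) (b : ℕ → ℕ → ℝ) (x : ℕ → ℝ) :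
    reluLayers dims Wt b 0 x = x :=
  rfl

lemma reluLayers_succ (dims : ℕ → ℕ) (Wt : ℕ → ℕ → ℕ → ℝ) (b : ℕ → ℕ → ℝ) (l : ℕ)
    (x : ℕ → ℝ) (i : ℕ) :
    reluLayers dims Wt b (l + 1) x i =
      reluF (mulVecN (Wt (l + 1)) (dims l) (reluLayers dims Wt b l x) i + b (l + 1) i) :=
  rfl

lemma reluLayers_one (dims : ℕ → ℕ) (Wt : ℕ → ℕ → ℕ → ℝ) (b : ℕ → ℕ → ℝ) (x : ℕ → ℝ)
    (i : ℕ) : reluLayers dims Wt b 1 x i = reluF (mulVecN (Wt 1) (dims 0) x i + b 1 i) :=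
  rfl

lemma reluLayers_nonneg (dims : ℕ → ℕ) (Wt : ℕ → ℕ → ℕ → ℝ) (b : ℕ → ℕ → ℝ) {l : ℕ}
    (hl : l ≠ 0) (x : ℕ → ℝ) (i : ℕ) : 0 ≤ reluLayers dims Wt b l x i := by
  obtain ⟨l, rfl⟩ := Nat.exists_eq_succ_of_ne_zero hl
  exact reluF_nonneg _

lemma isReluNetFun_iff {L W : ℕ} {g : ℝ → ℝ} :
    IsReluNetFun L W g ↔ ∃ (dims : ℕ → ℕ) (Wt : ℕ → ℕ → ℕ → ℝ) (b : ℕ → ℕ → ℝ),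
      dims 0 = 1 ∧ dims L = 1 ∧ (∀ l, 0 < l → l < L → dims l ≤ W) ∧
      ∀ x, mulVecN (Wt L) (dims (L - 1)) (reluLayers dims Wt b (L - 1) fun _ => x) 0 = g x := by
  constructor
  · rintro ⟨F, ⟨dims, Wt, b, act, h0, hL, hW, hact, hF⟩, hg⟩
    obtain rfl : act = fun _ _ => reluF := funext₂ hact
    exact ⟨dims, Wt, b, h0, hL, hW, fun x => (congrFun (hF _) 0).symm.trans (hg x)⟩
  · rintro ⟨dims, Wt, b, h0, hL, hW, hg⟩
    exact ⟨_, ⟨dims, Wt, b, _, h0, hL, hW, fun _ _ => rfl, fun _ => rfl⟩, hg⟩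

lemma IsReluNetFun.depth_succ {L W : ℕ} {g : ℝ → ℝ} (h : IsReluNetFun L W g) (hL : 2 ≤ L) :
    IsReluNetFun (L + 1) W g := by
  obtain ⟨dims, Wt, b, h0, -, hW, hg⟩ := isReluNetFun_iff.1 h
  let dims' : ℕ → ℕ := fun l => if l = L then dims (L - 1) else if l = L + 1 then 1 else dims l
  let Wt' : ℕ → ℕ → ℕ → ℝ := fun l =>
    if l = L then fun i j => if i = j then 1 else 0 else if l = L + 1 then Wt L else Wt l
  let b' : ℕ → ℕ → ℝ := fun l => if l = L then 0 else b l
  have hlow : ∀ l < L, ∀ x, reluLayers dims' Wt' b' l x = reluLayers dims Wt b l x := by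
    intro l hl x
    induction l with
    | zero => rfl
    | succ l ih =>
      funext i
      simp only [reluLayers_succ, ih (by omega), dims', Wt', b', if_neg (show l ≠ L by omega),
        if_neg (show l ≠ L + 1 by omega), if_neg (show l + 1 ≠ L by omega),
        if_neg (show l + 1 ≠ L + 1 by omega)]
  -- the new layer `L` copies the (nonnegative) output of layer `L - 1`
  have hcopy : ∀ x, ∀ i < dims (L - 1),
      reluLayers dims' Wt' b' L x i = reluLayers dims Wt b (L - 1) x i := by
    intro x i hi
    obtain ⟨l, rfl⟩ : ∃ l, L = l + 1 := ⟨L - 1, by omega⟩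
    rw [Nat.add_sub_cancel] at hi ⊢
    rw [reluLayers_succ, hlow l (by omega)]
    simp only [mulVecN, dims', Wt', b', if_neg (show l ≠ l + 1 by omega),
      if_neg (show l ≠ l + 1 + 1 by omega), if_pos rfl, ite_mul, one_mul, zero_mul,
      Finset.sum_ite_eq, Finset.mem_range, if_pos hi, Pi.zero_apply, add_zero]
    exact reluF_of_nonneg (reluLayers_nonneg _ _ _ (by omega) _ _)
  refine isReluNetFun_iff.2 ⟨dims', Wt', b', ?_, ?_, ?_, fun x => ?_⟩
  · simp only [dims', if_neg (show 0 ≠ L by omega), if_neg (show 0 ≠ L + 1 by omega), h0]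
  · simp [dims']
  · intro l hl0 hl
    by_cases hlL : l = L
    · simp only [dims', if_pos hlL]
      exact hW _ (by omega) (by omega)
    · simp only [dims', if_neg hlL, if_neg (show l ≠ L + 1 by omega)]
      exact hW _ hl0 (by omega)
  · rw [← hg, Nat.add_sub_cancel]
    simp only [Wt', dims', if_neg (show L + 1 ≠ L by omega), if_pos rfl]
    exact mulVecN_congr _ (hcopy _) 0

lemma IsReluNetFun.depth_mono {L L' W : ℕ} {g : ℝ → ℝ} (h : IsReluNetFun L W g) (hL : 2 ≤ L)
    (hLL' : L ≤ L') : IsReluNetFun L' W g := by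
  induction L', hLL' using Nat.le_induction with
  | base => exact h
  | succ L' hLL' ih => exact ih.depth_succ (hL.trans hLL')

theorem sum_range_mul_eq_sum_sum {M : Type*} [AddCommMonoid M] (f : ℕ → M) (m n : ℕ) :
    ∑ j ∈ range (m * n), f j = ∑ r ∈ range m, ∑ q ∈ range n, f (r * n + q) := by
  induction m with
  | zero => simp
  | succ m ih => rw [Nat.succ_mul, Finset.sum_range_add, ih, Finset.sum_range_succ]

lemma mul_add_div_of_lt {r n q : ℕ} (hq : q < n) : (r * n + q) / n = r := by
  rw [Nat.mul_comm, Nat.mul_add_div (by omega), Nat.div_eq_of_lt hq, add_zero]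

lemma mul_add_mod_of_lt {r n q : ℕ} (hq : q < n) : (r * n + q) % n = q := by
  rw [Nat.mul_comm, Nat.mul_add_mod, Nat.mod_eq_of_lt hq]

lemma IsReluNetFun.sum_shift {L W : ℕ} {g : ℝ → ℝ} (h : IsReluNetFun L W g) (hL : 2 ≤ L)
    (n : ℕ) (c s : ℕ → ℝ) :
    IsReluNetFun L (W * n) fun x => ∑ q ∈ range n, c q * g (x - s q) := by
  obtain ⟨dims, Wt, b, h0, -, hW, hg⟩ := isReluNetFun_iff.1 h
  -- neuron `r` of the copy `q` sits at index `r * n + q`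
  let dims' : ℕ → ℕ := fun l => if l = 0 ∨ l = L then 1 else dims l * n
  let Wt' : ℕ → ℕ → ℕ → ℝ := fun l i j =>
    if l = 1 then Wt 1 (i / n) j
    else if l = L then c (j % n) * Wt L i (j / n)
    else if i % n = j % n then Wt l (i / n) (j / n) else 0
  let b' : ℕ → ℕ → ℝ := fun l i =>
    if l = 1 then b 1 (i / n) - Wt 1 (i / n) 0 * s (i % n) else b l (i / n)
  have hcopy : ∀ l, 0 < l → l < L → ∀ x r q, q < n →
      reluLayers dims' Wt' b' l (fun _ => x) (r * n + q) =
        reluLayers dims Wt b l (fun _ => x - s q) r := by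
    intro l hl0 hlL x r q hq
    induction l generalizing r with
    | zero => omega
    | succ l ih =>
      rw [reluLayers_succ, reluLayers_succ]
      rcases Nat.eq_zero_or_pos l with rfl | hl
      · simp only [mulVecN, dims', Wt', b', h0, true_or, if_true, Finset.sum_range_one,
          reluLayers_zero, mul_add_div_of_lt hq, mul_add_mod_of_lt hq]
        congr 1
        ring
      · congr 1
        simp only [b', if_neg (show l + 1 ≠ 1 by omega), mul_add_div_of_lt hq]
        congr 1
        simp only [mulVecN, dims', Wt', if_neg (show l + 1 ≠ 1 by omega),
          if_neg (show l + 1 ≠ L by omega), if_neg (show ¬(l = 0 ∨ l = L) by omega),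
          sum_range_mul_eq_sum_sum, mul_add_div_of_lt hq, mul_add_mod_of_lt hq]
        refine Finset.sum_congr rfl fun r' _ => ?_
        rw [Finset.sum_eq_single_of_mem q (Finset.mem_range.2 hq)]
        · rw [mul_add_mod_of_lt hq, mul_add_div_of_lt hq, if_pos rfl, ih hl (by omega)]
        · intro q' hq' hne
          rw [if_neg (by rw [mul_add_mod_of_lt (Finset.mem_range.1 hq')]; exact hne.symm),
            zero_mul]
  refine isReluNetFun_iff.2 ⟨dims', Wt', b', by simp [dims'], by simp [dims'], ?_, fun x => ?_⟩
  · intro l hl0 hlL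
    simp only [dims', if_neg (show ¬(l = 0 ∨ l = L) by omega)]
    exact Nat.mul_le_mul_right n (hW l hl0 hlL)
  · simp only [mulVecN, dims', Wt', if_neg (show ¬(L - 1 = 0 ∨ L - 1 = L) by omega),
      if_neg (show L ≠ 1 by omega), sum_range_mul_eq_sum_sum]
    rw [Finset.sum_comm]
    refine Finset.sum_congr rfl fun q hq => ?_
    rw [← hg, mulVecN, Finset.mul_sum]
    refine Finset.sum_congr rfl fun r _ => ?_
    rw [mul_add_mod_of_lt (Finset.mem_range.1 hq), mul_add_div_of_lt (Finset.mem_range.1 hq),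
      hcopy (L - 1) (by omega) (by omega) x r q (Finset.mem_range.1 hq), if_pos trivial]
    ring

def softBit (δ u : ℝ) : ℝ := reluF ((u - 2⁻¹) / δ + 1) - reluF ((u - 2⁻¹) / δ)

def digitCoeff (D j : ℕ) : ℝ := 2 * ((3 : ℝ) ^ (1 + D * j))⁻¹

/-- `digitRem δ t j` is the pre-activation approximating `frac (2 ^ j * t)`. -/
def digitRem (δ t : ℝ) : ℕ → ℝ
  | 0 => t
  | j + 1 => 2 * reluF (digitRem δ t j) - softBit δ (digitRem δ t j)

def digitAcc (δ : ℝ) (D : ℕ) (t : ℝ) : ℕ → ℝ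
  | 0 => 0
  | j + 1 => reluF (digitAcc δ D t j) + digitCoeff D j * softBit δ (digitRem δ t j)

def blockFn (δ : ℝ) (D K : ℕ) (t : ℝ) : ℝ :=
  reluF (digitAcc δ D t K) + (1 - ∑ j ∈ range K, digitCoeff D j) *
    (reluF (reluF (digitRem δ t (K - 1)) - 1) - reluF (reluF (digitRem δ t (K - 1)) - 2))


lemma softBit_nonneg (δ u : ℝ) : 0 ≤ softBit δ u := by
  unfold softBit reluF
  exact sub_nonneg.2 (max_le_max (by linarith) le_rfl)

lemma digitCoeff_nonneg (D j : ℕ) : 0 ≤ digitCoeff D j := by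
  unfold digitCoeff
  positivity

lemma digitAcc_nonneg (δ : ℝ) (D : ℕ) (t : ℝ) (j : ℕ) : 0 ≤ digitAcc δ D t j := by
  cases j with
  | zero => exact le_rfl
  | succ j =>
    exact add_nonneg (reluF_nonneg _) (mul_nonneg (digitCoeff_nonneg D j) (softBit_nonneg δ _))

lemma softBit_of_le {δ u : ℝ} (hδ : 0 < δ) (h : u ≤ 2⁻¹ - δ) : softBit δ u = 0 := by
  have : (u - 2⁻¹) / δ ≤ -1 := by rw [div_le_iff₀ hδ]; linarith
  rw [softBit, reluF_of_nonpos (by linarith), reluF_of_nonpos (by linarith), sub_zero]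

lemma softBit_of_ge {δ u : ℝ} (hδ : 0 < δ) (h : 2⁻¹ ≤ u) : softBit δ u = 1 := by
  have : 0 ≤ (u - 2⁻¹) / δ := div_nonneg (by linarith) hδ.le
  rw [softBit, reluF_of_nonneg (by linarith), reluF_of_nonneg this]
  ring

lemma digitRem_digitAcc_of_nonpos {δ t : ℝ} (hδ : 0 < δ) (hδ2 : δ ≤ 2⁻¹) (ht : t ≤ 0) (D : ℕ) :
    ∀ j, digitRem δ t j ≤ 0 ∧ digitAcc δ D t j = 0 := by
  intro j
  induction j with
  | zero => exact ⟨ht, rfl⟩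
  | succ j ih =>
    have hbit : softBit δ (digitRem δ t j) = 0 := softBit_of_le hδ (by linarith [ih.1])
    simp only [digitRem, digitAcc, hbit, reluF_of_nonpos ih.1, ih.2, reluF_of_nonpos le_rfl]
    norm_num

lemma digitRem_digitAcc_of_one_le {δ t : ℝ} (hδ : 0 < δ) (ht : 1 ≤ t) (D : ℕ) :
    ∀ j, t ≤ digitRem δ t j ∧ digitAcc δ D t j = ∑ i ∈ range j, digitCoeff D i := by
  intro j
  induction j with
  | zero => exact ⟨le_rfl, rfl⟩
  | succ j ih =>
    obtain ⟨hrem, hacc⟩ := ih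
    have hbit : softBit δ (digitRem δ t j) = 1 := softBit_of_ge hδ (by linarith)
    refine ⟨?_, ?_⟩
    · rw [digitRem, hbit, reluF_of_nonneg (by linarith)]
      linarith
    · rw [digitAcc, hbit, hacc,
        reluF_of_nonneg (Finset.sum_nonneg fun i _ => digitCoeff_nonneg D i),
        Finset.sum_range_succ, mul_one]

lemma blockFn_of_nonpos {δ t : ℝ} (hδ : 0 < δ) (hδ2 : δ ≤ 2⁻¹) (ht : t ≤ 0) (D K : ℕ) :
    blockFn δ D K t = 0 := by
  obtain ⟨hrem, -⟩ := digitRem_digitAcc_of_nonpos hδ hδ2 ht D (K - 1)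
  obtain ⟨-, hacc⟩ := digitRem_digitAcc_of_nonpos hδ hδ2 ht D K
  rw [blockFn, hacc, reluF_of_nonpos hrem]
  norm_num [reluF]

lemma blockFn_of_two_le {δ t : ℝ} (hδ : 0 < δ) (ht : 2 ≤ t) (D K : ℕ) :
    blockFn δ D K t = 1 := by
  have ht1 : 1 ≤ t := by linarith
  obtain ⟨hrem, -⟩ := digitRem_digitAcc_of_one_le hδ ht1 D (K - 1)
  obtain ⟨-, hacc⟩ := digitRem_digitAcc_of_one_le hδ ht1 D K
  rw [blockFn, hacc, reluF_of_nonneg (Finset.sum_nonneg fun i _ => digitCoeff_nonneg D i),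
    reluF_of_nonneg (show 0 ≤ digitRem δ t (K - 1) by linarith),
    reluF_of_nonneg (show 0 ≤ digitRem δ t (K - 1) - 1 by linarith),
    reluF_of_nonneg (show 0 ≤ digitRem δ t (K - 1) - 2 by linarith)]
  ring

lemma softBit_fract {δ : ℝ} (hδ : 0 < δ) {z : ℝ} (h : Int.fract z ∉ Ioo (2⁻¹ - δ) 2⁻¹) :
    softBit δ (Int.fract z) = ⌊2 * Int.fract z⌋ := by
  have h0 := Int.fract_nonneg z
  have h1 := Int.fract_lt_one z
  rcases le_or_gt 2⁻¹ (Int.fract z) with hz | hz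
  · have hfl : ⌊2 * Int.fract z⌋ = 1 := by
      rw [Int.floor_eq_iff]; constructor <;> push_cast <;> linarith
    rw [softBit_of_ge hδ hz, hfl, Int.cast_one]
  · have hfl : ⌊2 * Int.fract z⌋ = 0 := by
      rw [Int.floor_eq_zero_iff]; constructor <;> linarith
    rw [softBit_of_le hδ (by by_contra hc; exact h ⟨by linarith, hz⟩), hfl, Int.cast_zero]

lemma fract_two_mul (z : ℝ) : Int.fract (2 * z) = 2 * Int.fract z - ⌊2 * Int.fract z⌋ := by
  have h : 2 * z = 2 * Int.fract z + ((2 * ⌊z⌋ : ℤ) : ℝ) := by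
    rw [Int.fract]; push_cast; ring
  rw [h, Int.fract_add_intCast, Int.fract]

lemma binDigit_succ (t : ℝ) (j : ℕ) : binDigit t (j + 1) = ⌊2 * Int.fract (2 ^ j * t)⌋ := by
  have h : 2 * Int.fract ((2 : ℝ) ^ j * t) =
      2 ^ (j + 1) * t - ((2 * ⌊(2 : ℝ) ^ j * t⌋ : ℤ) : ℝ) := by
    rw [Int.fract]; push_cast; ring
  rw [h, Int.floor_sub_intCast, binDigit, Nat.add_sub_cancel]

lemma digitRem_digitAcc_of_good {δ t : ℝ} (hδ : 0 < δ) (h0 : 0 ≤ t) (h1 : t < 1) {D K : ℕ}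
    (hgood : ∀ i < K, Int.fract (2 ^ i * t) ∉ Ioo (2⁻¹ - δ) 2⁻¹) :
    ∀ j ≤ K, digitRem δ t j = Int.fract (2 ^ j * t) ∧ digitAcc δ D t j = phiK D j t := by
  intro j hj
  induction j with
  | zero =>
    simp [digitRem, digitAcc, phiK, Int.fract_eq_self.2 ⟨h0, h1⟩]
  | succ j ih =>
    obtain ⟨hrem, hacc⟩ := ih (by omega)
    have hbit := softBit_fract hδ (hgood j (by omega))
    have hacc0 : 0 ≤ phiK D j t := hacc ▸ digitAcc_nonneg δ D t j
    refine ⟨?_, ?_⟩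
    · rw [digitRem, hrem, reluF_of_nonneg (Int.fract_nonneg _), hbit, pow_succ, mul_comm _ 2,
        mul_assoc, fract_two_mul]
    · rw [digitAcc, hacc, hrem, reluF_of_nonneg hacc0, hbit, ← binDigit_succ, phiK, phiK,
        Finset.sum_Icc_succ_top (by omega), Nat.add_sub_cancel, digitCoeff]
      ring

lemma blockFn_of_good {δ t : ℝ} (hδ : 0 < δ) (h0 : 0 ≤ t) (h1 : t < 1) (D : ℕ) {K : ℕ}
    (hK : 1 ≤ K) (hgood : ∀ i < K, Int.fract (2 ^ i * t) ∉ Ioo (2⁻¹ - δ) 2⁻¹) :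
    blockFn δ D K t = phiK D K t := by
  obtain ⟨hrem, -⟩ := digitRem_digitAcc_of_good hδ h0 h1 (D := D) hgood (K - 1) (by omega)
  obtain ⟨-, hacc⟩ := digitRem_digitAcc_of_good hδ h0 h1 (D := D) hgood K le_rfl
  have hfr0 := Int.fract_nonneg ((2 : ℝ) ^ (K - 1) * t)
  have hfr1 := Int.fract_lt_one ((2 : ℝ) ^ (K - 1) * t)
  rw [blockFn, ← hacc, reluF_of_nonneg (digitAcc_nonneg δ D t K), hrem,
    reluF_of_nonneg hfr0, reluF_of_nonpos (by linarith), reluF_of_nonpos (by linarith)]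
  ring
-- A hidden layer of a block holds `relu` of `digitPre δ u σ`: the remainder `u`, the digit sum
-- `σ`, and the two ReLUs whose difference is `softBit δ u`.
def digitPre (δ u σ : ℝ) : ℕ → ℝ
  | 0 => u
  | 1 => σ
  | 2 => (u - 2⁻¹) / δ + 1
  | 3 => (u - 2⁻¹) / δ
  | _ => 0

def finalPre (σ y : ℝ) : ℕ → ℝ
  | 0 => σ
  | 1 => y - 1
  | 2 => y - 2
  | _ => 0

def firstW (δ : ℝ) : ℕ → ℕ → ℝ
  | 0, _ => 1
  | 2, _ => δ⁻¹
  | 3, _ => δ⁻¹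
  | _, _ => 0

def digitW (δ c : ℝ) : ℕ → ℕ → ℝ
  | 0, 0 => 2 | 0, 2 => -1 | 0, 3 => 1
  | 1, 1 => 1 | 1, 2 => c | 1, 3 => -c
  | 2, 0 => 2 * δ⁻¹ | 2, 2 => -δ⁻¹ | 2, 3 => δ⁻¹
  | 3, 0 => 2 * δ⁻¹ | 3, 2 => -δ⁻¹ | 3, 3 => δ⁻¹
  | _, _ => 0

def digitBias (δ : ℝ) : ℕ → ℝ
  | 2 => 1 - (2 * δ)⁻¹
  | 3 => -(2 * δ)⁻¹
  | _ => 0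

def finalW (c : ℝ) : ℕ → ℕ → ℝ
  | 0, 1 => 1 | 0, 2 => c | 0, 3 => -c
  | 1, 0 => 1 | 2, 0 => 1
  | _, _ => 0

def finalBias : ℕ → ℝ
  | 1 => -1
  | 2 => -2
  | _ => 0

def outW (S : ℝ) : ℕ → ℕ → ℝ
  | 0, 0 => 1 | 0, 1 => 1 - S | 0, 2 => -(1 - S)
  | _, _ => 0

lemma firstW_apply (δ t : ℝ) (i : ℕ) :
    mulVecN (firstW δ) 1 (fun _ => t) i + digitBias δ i = digitPre δ t 0 i := by
  match i with
  | 0 | 1 | 2 | 3 => simp [mulVecN, firstW, digitBias, digitPre] <;> ring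
  | _ + 4 => simp [mulVecN, firstW, digitBias, digitPre]

lemma digitW_apply (δ c u σ : ℝ) (i : ℕ) :
    mulVecN (digitW δ c) 4 (fun j => reluF (digitPre δ u σ j)) i + digitBias δ i =
      digitPre δ (2 * reluF u - softBit δ u) (reluF σ + c * softBit δ u) i := by
  match i with
  | 0 | 1 | 2 | 3 =>
    simp [mulVecN, Finset.sum_range_succ, digitW, digitBias, digitPre, softBit]; ring
  | _ + 4 => simp [mulVecN, digitW, digitBias, digitPre]

lemma finalW_apply (δ c u σ : ℝ) (i : ℕ) :
    mulVecN (finalW c) 4 (fun j => reluF (digitPre δ u σ j)) i + finalBias i =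
      finalPre (reluF σ + c * softBit δ u) (reluF u) i := by
  match i with
  | 0 | 1 | 2 | 3 =>
    simp [mulVecN, Finset.sum_range_succ, finalW, finalBias, finalPre, digitPre, softBit] <;> ring
  | _ + 4 => simp [mulVecN, finalW, finalBias, finalPre]

lemma outW_apply (S σ y : ℝ) :
    mulVecN (outW S) 4 (fun j => reluF (finalPre σ y j)) 0 =
      reluF σ + (1 - S) * (reluF (y - 1) - reluF (y - 2)) := by
  simp [mulVecN, Finset.sum_range_succ, outW, finalPre]; ring

lemma isReluNetFun_blockFn_add_two (δ : ℝ) (D : ℕ) {K : ℕ} (hK : 1 ≤ K) :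
    IsReluNetFun (K + 2) 4 (blockFn δ D K) := by
  -- layer `1` reads `t`, layers `2, …, K` extract one digit each, layer `K + 1` finishes
  let dims : ℕ → ℕ := fun l => if l = 0 ∨ l = K + 2 then 1 else 4
  let Wt : ℕ → ℕ → ℕ → ℝ := fun l =>
    if l = 1 then firstW δ
    else if l ≤ K then digitW δ (digitCoeff D (l - 2))
    else if l = K + 1 then finalW (digitCoeff D (K - 1))
    else outW (∑ j ∈ range K, digitCoeff D j)
  let b : ℕ → ℕ → ℝ := fun l => if l ≤ K then digitBias δ else finalBias
  have hdigit : ∀ t, ∀ m, m + 1 ≤ K → reluLayers dims Wt b (m + 1) (fun _ => t) =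
      fun i => reluF (digitPre δ (digitRem δ t m) (digitAcc δ D t m) i) := by
    intro t m hm
    induction m with
    | zero =>
      funext i
      rw [reluLayers_succ, reluLayers_zero]
      simp only [dims, Wt, b, if_pos (Or.inl rfl), if_pos rfl, if_pos hm, firstW_apply]
      rfl
    | succ m ih =>
      funext i
      rw [reluLayers_succ, ih (by omega)]
      simp only [dims, Wt, b, if_neg (show ¬(m + 1 = 0 ∨ m + 1 = K + 2) by omega),
        if_neg (show m + 1 + 1 ≠ 1 by omega), if_pos hm, digitW_apply]
      rfl
  refine isReluNetFun_iff.2 ⟨dims, Wt, b, by simp [dims], by simp [dims], ?_, fun t => ?_⟩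
  · intro l hl0 hl
    simp only [dims, if_neg (show ¬(l = 0 ∨ l = K + 2) by omega), le_refl]
  · obtain ⟨k, rfl⟩ : ∃ k, K = k + 1 := ⟨K - 1, by omega⟩
    have hfinal : reluLayers dims Wt b (k + 2) (fun _ => t) =
        fun i => reluF (finalPre (digitAcc δ D t (k + 1)) (reluF (digitRem δ t k)) i) := by
      funext i
      rw [reluLayers_succ, hdigit t k le_rfl]
      simp only [dims, Wt, b, if_neg (show ¬(k + 1 = 0 ∨ k + 1 = k + 1 + 2) by omega),
        if_neg (show k + 1 + 1 ≠ 1 by omega), if_neg (show ¬(k + 1 + 1 ≤ k + 1) by omega),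
        ↓reduceIte, Nat.add_sub_cancel, finalW_apply]
      rfl
    simp only [show k + 1 + 2 - 1 = k + 2 by omega, hfinal, dims, Wt,
      if_neg (show ¬(k + 2 = 0 ∨ k + 2 = k + 1 + 2) by omega),
      if_neg (show k + 1 + 2 ≠ 1 by omega), if_neg (show ¬(k + 1 + 2 ≤ k + 1) by omega),
      if_neg (show k + 1 + 2 ≠ k + 1 + 1 by omega), outW_apply]
    rfl
def shallowW (δ : ℝ) : ℕ → ℕ → ℝ
  | 0, _ => 1
  | 1, _ => 1
  | 2, _ => δ⁻¹
  | 3, _ => δ⁻¹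
  | _, _ => 0

def shallowBias (δ : ℝ) : ℕ → ℝ
  | 0 => -1
  | 1 => -2
  | 2 => 1 - (2 * δ)⁻¹
  | 3 => -(2 * δ)⁻¹
  | _ => 0

def shallowOutW (c : ℝ) : ℕ → ℕ → ℝ
  | 0, 0 => 1 - c | 0, 1 => -(1 - c) | 0, 2 => c | 0, 3 => -c
  | _, _ => 0

lemma isReluNetFun_blockFn_one (δ : ℝ) (D : ℕ) : IsReluNetFun 2 4 (blockFn δ D 1) := by
  refine isReluNetFun_iff.2 ⟨fun l => if l = 1 then 4 else 1,
    fun l => if l = 1 then shallowW δ else shallowOutW (digitCoeff D 0), fun _ => shallowBias δ,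
    rfl, rfl, fun l _ _ => by dsimp only; split_ifs <;> omega, fun t => ?_⟩
  have hacc : reluF (digitAcc δ D t 1) = digitCoeff D 0 * softBit δ t :=
    (reluF_of_nonneg (digitAcc_nonneg δ D t 1)).trans (by simp [digitAcc, digitRem, reluF])
  simp [mulVecN, Finset.sum_range_succ, reluLayers_one, shallowW, shallowBias, shallowOutW,
    blockFn, hacc, digitRem, reluF_reluF_sub, softBit]
  ring_nf

lemma isReluNetFun_blockFn (δ : ℝ) (D : ℕ) {K : ℕ} (hK : 1 ≤ K) :
    IsReluNetFun (2 * K) 4 (blockFn δ D K) := by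
  rcases eq_or_lt_of_le hK with rfl | hK2
  · exact isReluNetFun_blockFn_one δ D
  · exact (isReluNetFun_blockFn_add_two δ D hK).depth_mono (by omega) (by omega)

lemma volume_Ico_inter_fract_mul_preimage_Ioo_le {N : ℕ} (hN : 0 < N) (a b : ℝ) :
    volume (Ico (0 : ℝ) 1 ∩ (fun t => Int.fract (N * t)) ⁻¹' Ioo a b) ≤
      ENNReal.ofReal (b - a) := by
  have hN' : (0 : ℝ) < N := by exact_mod_cast hN
  have hsub : Ico (0 : ℝ) 1 ∩ (fun t => Int.fract (N * t)) ⁻¹' Ioo a b ⊆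
      ⋃ m ∈ range N, Ioo ((m + a) / N) ((m + b) / N) := by
    rintro t ⟨⟨ht0, ht1⟩, hab, hba⟩
    have hNt : 0 ≤ (N : ℝ) * t := by positivity
    have hfr : Int.fract ((N : ℝ) * t) = N * t - ⌊(N : ℝ) * t⌋₊ := by
      rw [Int.fract, natCast_floor_eq_intCast_floor hNt]
    simp only [hfr] at hab hba
    refine mem_biUnion (x := ⌊(N : ℝ) * t⌋₊) ?_ ⟨?_, ?_⟩
    · rw [Finset.mem_coe, Finset.mem_range, Nat.floor_lt hNt]
      nlinarith
    · rw [div_lt_iff₀ hN']; linarith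
    · rw [lt_div_iff₀ hN']; linarith
  calc _ ≤ volume (⋃ m ∈ range N, Ioo ((m + a) / N) ((m + b) / (N : ℝ))) := measure_mono hsub
    _ ≤ ∑ m ∈ range N, volume (Ioo ((m + a) / N) ((m + b) / (N : ℝ))) :=
      measure_biUnion_finset_le _ _
    _ = ∑ m ∈ range N, ENNReal.ofReal ((b - a) / N) :=
      Finset.sum_congr rfl fun m _ => by rw [Real.volume_Ioo]; congr 1; ring
    _ = N * ENNReal.ofReal ((b - a) / N) := by
      rw [Finset.sum_const, Finset.card_range, nsmul_eq_mul]
    _ = ENNReal.ofReal (b - a) := by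
      rw [← ENNReal.ofReal_natCast, ← ENNReal.ofReal_mul hN'.le, mul_div_cancel₀ _ hN'.ne']

-- `t = 1` is exceptional: its terminating binary digits are all `0`, whereas the network reads
-- `1 = 0.111…₂`.
def exceptionalSet (δ : ℝ) (K : ℕ) : Set ℝ :=
  Icc 0 1 ∩ ({1} ∪ ⋃ i ∈ range K, (fun t => Int.fract (2 ^ i * t)) ⁻¹' Ioo (2⁻¹ - δ) 2⁻¹)

lemma measurableSet_exceptionalSet (δ : ℝ) (K : ℕ) : MeasurableSet (exceptionalSet δ K) :=
  measurableSet_Icc.inter <| (measurableSet_singleton 1).union <|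
    Finset.measurableSet_biUnion _ fun _ _ =>
      (measurable_fract.comp (measurable_const_mul _)) measurableSet_Ioo

lemma volume_exceptionalSet_le (δ : ℝ) (K : ℕ) :
    volume (exceptionalSet δ K) ≤ ENNReal.ofReal (K * δ) := by
  have hsub : exceptionalSet δ K ⊆ {1} ∪ ⋃ i ∈ range K,
      Ico 0 1 ∩ (fun t => Int.fract (((2 ^ i : ℕ) : ℝ) * t)) ⁻¹' Ioo (2⁻¹ - δ) 2⁻¹ := by
    rintro t ⟨⟨ht0, ht1⟩, rfl | ht⟩
    · exact Or.inl rfl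
    rcases eq_or_lt_of_le ht1 with rfl | ht1
    · exact Or.inl rfl
    simp only [mem_iUnion] at ht
    obtain ⟨i, hi, hmem⟩ := ht
    exact Or.inr (mem_biUnion hi ⟨⟨ht0, ht1⟩, by simpa using hmem⟩)
  calc _ ≤ volume ({1} ∪ ⋃ i ∈ range K,
        Ico 0 1 ∩ (fun t => Int.fract (((2 ^ i : ℕ) : ℝ) * t)) ⁻¹' Ioo (2⁻¹ - δ) 2⁻¹) :=
      measure_mono hsub
    _ ≤ 0 + ∑ i ∈ range K, ENNReal.ofReal δ := by
      refine (measure_union_le _ _).trans (add_le_add (measure_singleton 1).le ?_)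
      refine (measure_biUnion_finset_le _ _).trans (Finset.sum_le_sum fun i _ => ?_)
      simpa using volume_Ico_inter_fract_mul_preimage_Ioo_le (Nat.two_pow_pos i) (2⁻¹ - δ) 2⁻¹
    _ = ENNReal.ofReal (K * δ) := by
      rw [zero_add, Finset.sum_const, Finset.card_range, nsmul_eq_mul,
        ENNReal.ofReal_mul (Nat.cast_nonneg K), ENNReal.ofReal_natCast]

lemma sum_range_three_zpow (q : ℕ) :
    ∑ j ∈ range q, (3 : ℝ) ^ ((1 : ℤ) - j) = 9 / 2 - 1 / 2 * (3 : ℝ) ^ ((2 : ℤ) - q) := by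
  induction q with
  | zero => norm_num
  | succ q ih =>
    rw [Finset.sum_range_succ, ih, show (2 : ℤ) - q = 1 - q + 1 by ring,
      show (2 : ℤ) - (q + 1 : ℕ) = 1 - q by push_cast; ring, zpow_add₀ (by norm_num), zpow_one]
    ring

lemma lt_one_and_good_of_notMem_exceptionalSet {δ t : ℝ} {K : ℕ} (ht : t ∈ Set.Icc 0 1)
    (h : t ∉ exceptionalSet δ K) :
    t < 1 ∧ ∀ i < K, Int.fract (2 ^ i * t) ∉ Ioo (2⁻¹ - δ) 2⁻¹ := by
  simp only [exceptionalSet, Set.mem_inter_iff, Set.mem_union, Set.mem_singleton_iff,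
    Set.mem_iUnion, Set.mem_preimage, Finset.mem_range, not_and, not_or, not_exists] at h
  obtain ⟨hne, hgood⟩ := h ht
  exact ⟨lt_of_le_of_ne ht.2 hne, hgood⟩

lemma sum_blockFn_shift {δ : ℝ} (hδ : 0 < δ) (hδ2 : δ ≤ 2⁻¹) (D : ℕ) {K n q : ℕ} (hK : 1 ≤ K)
    (hq : q < n) {x : ℝ} (hx : x ∈ Set.Icc (2 * (q : ℝ)) (2 * q + 1))
    (hxΩ : x - 2 * q ∉ exceptionalSet δ K) :
    ∑ j ∈ range n, (3 : ℝ) ^ ((1 : ℤ) - j) * blockFn δ D K (x - 2 * j) =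
      (3 : ℝ) ^ ((1 : ℤ) - q) * phiK D K (x - 2 * q) + 9 / 2 - 1 / 2 * (3 : ℝ) ^ ((2 : ℤ) - q) := by
  obtain ⟨hlt, hgood⟩ := lt_one_and_good_of_notMem_exceptionalSet
    ⟨by linarith [hx.1], by linarith [hx.2]⟩ hxΩ
  have hbefore : ∑ j ∈ range q, (3 : ℝ) ^ ((1 : ℤ) - j) * blockFn δ D K (x - 2 * j) =
      ∑ j ∈ range q, (3 : ℝ) ^ ((1 : ℤ) - j) := Finset.sum_congr rfl fun j hj => by
    have : (j : ℝ) + 1 ≤ q := by exact_mod_cast Finset.mem_range.1 hj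
    rw [blockFn_of_two_le hδ (by linarith [hx.1]) D K, mul_one]
  have hafter : ∑ j ∈ Finset.Ico (q + 1) n,
      (3 : ℝ) ^ ((1 : ℤ) - j) * blockFn δ D K (x - 2 * j) = 0 := Finset.sum_eq_zero fun j hj => by
    have : (q : ℝ) + 1 ≤ j := by exact_mod_cast (Finset.mem_Ico.1 hj).1
    rw [blockFn_of_nonpos hδ hδ2 (by linarith [hx.2]) D K, mul_zero]
  rw [← Finset.sum_range_add_sum_Ico _ (show q + 1 ≤ n by omega), Finset.sum_range_succ,
    hbefore, hafter, blockFn_of_good hδ (by linarith [hx.1]) hlt D hK hgood, sum_range_three_zpow]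
  ring

theorem stmt9_general (d n K : ℕ) (hK : 1 ≤ K)
    (β : ℝ) (p : ℝ) :
    ∃ Ω : Set ℝ, MeasurableSet Ω ∧ Ω ⊆ Set.Icc 0 1 ∧
      volume Ω ≤ ENNReal.ofReal ((2:ℝ) ^ (-((K : ℝ) * β * p))) ∧
      ∃ F : (ℕ → ℝ) → ℕ → ℝ,
        IsFFNet 1 1 (2 * K) (4 * n) {reluF} F ∧
        ∀ q : ℕ, q < n → ∀ x : ℝ, x ∈ Set.Icc (2 * (q : ℝ)) (2 * (q : ℝ) + 1) →
          x - 2 * (q : ℝ) ∉ Ω →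
          F (fun _ => x) 0 =
            (3:ℝ) ^ ((1 : ℤ) - (q : ℤ)) * phiK (d * n) K (x - 2 * (q : ℝ)) +
              9 / 2 - 1 / 2 * (3:ℝ) ^ ((2 : ℤ) - (q : ℤ)) := by
  set ρ : ℝ := (2:ℝ) ^ (-((K : ℝ) * β * p))
  set δ : ℝ := min (ρ / K) 2⁻¹
  have hK' : (0 : ℝ) < K := by exact_mod_cast hK
  have hδ : 0 < δ := lt_min (div_pos (by positivity) hK') (by norm_num)
  have hKδ : K * δ ≤ ρ := by
    calc K * δ ≤ K * (ρ / K) := mul_le_mul_of_nonneg_left (min_le_left _ _) hK'.le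
      _ = ρ := mul_div_cancel₀ _ hK'.ne'
  obtain ⟨F, hF, hFx⟩ := (isReluNetFun_blockFn δ (d * n) hK).sum_shift (by omega) n
    (fun j => (3 : ℝ) ^ ((1 : ℤ) - j)) (fun j => 2 * j)
  refine ⟨exceptionalSet δ K, measurableSet_exceptionalSet δ K, inter_subset_left,
    (volume_exceptionalSet_le δ K).trans (ENNReal.ofReal_le_ofReal hKδ), F, hF,
    fun q hq x hx hxΩ => ?_⟩
  rw [hFx]
  exact sum_blockFn_shift hδ (min_le_right _ _) (d * n) hK hq hx hxΩ

theorem stmt9 (d n K : ℕ) (hd : 1 ≤ d) (hn : 1 ≤ n) (hK : 1 ≤ K)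
    (β : ℝ) (hβ0 : 0 < β) (hβ1 : β ≤ 1) (p : ℝ) (hp : 1 ≤ p) :
    ∃ Ω : Set ℝ, MeasurableSet Ω ∧ Ω ⊆ Set.Icc 0 1 ∧
      volume Ω ≤ ENNReal.ofReal ((2:ℝ) ^ (-((K : ℝ) * β * p))) ∧
      ∃ F : (ℕ → ℝ) → ℕ → ℝ,
        IsFFNet 1 1 (2 * K) (4 * n) {reluF} F ∧
        ∀ q : ℕ, q < n → ∀ x : ℝ, x ∈ Set.Icc (2 * (q : ℝ)) (2 * (q : ℝ) + 1) →
          x - 2 * (q : ℝ) ∉ Ω →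
          F (fun _ => x) 0 =
            (3:ℝ) ^ ((1 : ℤ) - (q : ℤ)) * phiK (d * n) K (x - 2 * (q : ℝ)) +
              9 / 2 - 1 / 2 * (3:ℝ) ^ ((2 : ℤ) - (q : ℤ)) :=
  stmt9_general d n K hK β p

end
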